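/- arXiv:2406.18438 — 5 statements merged into one kernel-verified Lean document; each statement's English description precedes it below -/
import Mathlib

section
/- Let L be a lattice of signature (1,n) with positive cone C, let x be a point of the hyperboloid model H^n = {x ∈ C : (x,x) = 1}, and let e, e' be distinct primitive isotropic integral vectors in the closure of C. Then (e,e') ≤ 2(x,e)(x,e'). -/
open Matrix Filter Topology
open scoped BigOperators

noncomputable section

/-- The standard Minkowski bilinear form of signature `(1,n)` on `ℝ^{n+1}`. -/
def mink (n : ℕ) (v w : Fin (n+1) → ℝ) : ℝ :=
  v 0 * w 0 - ∑ i : Fin n, v i.succ * w i.succ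

/-- Real coordinates of an integral vector. -/
def zc (n : ℕ) (v : Fin (n+1) → ℤ) : Fin (n+1) → ℝ := fun i => (v i : ℝ)

/-- An integral vector is primitive if it is not an integer multiple `k • w`, `k ≥ 2`. -/
def Primitive (n : ℕ) (e : Fin (n+1) → ℤ) : Prop :=
  ¬ ∃ (w : Fin (n+1) → ℤ) (k : ℤ), 2 ≤ k ∧ e = k • w

/-- The hyperboloid model determined by the form `B` and the positive cone `C`. -/
def hyperboloid (n : ℕ) (B : (Fin (n+1) → ℝ) → (Fin (n+1) → ℝ) → ℝ)
    (C : Set (Fin (n+1) → ℝ)) : Set (Fin (n+1) → ℝ) :=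
  {x | x ∈ C ∧ B x x = 1}


lemma mink_comm (n : ℕ) (v w : Fin (n+1) → ℝ) : mink n v w = mink n w v := by
  simp [mink, mul_comm]

lemma mink_add_left (n : ℕ) (v w u : Fin (n+1) → ℝ) :
    mink n (v + w) u = mink n v u + mink n w u := by
  simp [mink, add_mul, Finset.sum_add_distrib]; ring

lemma mink_sub_left (n : ℕ) (v w u : Fin (n+1) → ℝ) :
    mink n (v - w) u = mink n v u - mink n w u := by
  simp [mink, sub_mul, Finset.sum_sub_distrib]; ring

lemma mink_smul_left (n : ℕ) (c : ℝ) (v u : Fin (n+1) → ℝ) :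
    mink n (c • v) u = c * mink n v u := by
  simp [mink, Finset.mul_sum, mul_sub, mul_assoc]

lemma mink_self_nonpos (n : ℕ) (a : Fin (n+1) → ℝ) (h : a 0 = 0) :
    mink n a a ≤ 0 := by
  have : (0:ℝ) ≤ ∑ i : Fin n, a i.succ * a i.succ :=
    Finset.sum_nonneg fun i _ => mul_self_nonneg _
  simp only [mink, h, zero_mul, zero_sub, neg_nonpos]
  exact this

lemma mink_plane (n : ℕ) (a b : Fin (n+1) → ℝ) (ha : 0 < mink n a a)
    (hab : mink n a b = 0) : mink n b b ≤ 0 := by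
  by_contra hb
  push_neg at hb
  have ha0 : a 0 ≠ 0 := fun h => absurd (mink_self_nonpos n a h) (not_le.mpr ha)
  set c : Fin (n+1) → ℝ := b 0 • a - a 0 • b with hc
  have hc0 : c 0 = 0 := by simp [hc, mul_comm]
  have hcc : mink n c c ≤ 0 := mink_self_nonpos n c hc0
  have hexp : mink n c c = b 0 * (b 0 * mink n a a - a 0 * mink n b a)
      - a 0 * (b 0 * mink n a b - a 0 * mink n b b) := by
    rw [hc, mink_sub_left, mink_smul_left, mink_smul_left,
        mink_comm n a _, mink_sub_left, mink_smul_left, mink_smul_left,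
        mink_comm n b (b 0 • a - a 0 • b), mink_sub_left, mink_smul_left, mink_smul_left,
        mink_comm n a a, mink_comm n b a, mink_comm n a b, mink_comm n b b]
  have hba : mink n b a = 0 := by rw [mink_comm]; exact hab
  have ha2 : 0 < a 0 ^ 2 := pow_two_pos_of_ne_zero ha0
  rw [hab, hba] at hexp
  nlinarith [hcc, hexp, sq_nonneg (b 0), mul_pos ha2 hb,
    mul_nonneg (sq_nonneg (b 0)) ha.le]

/-- for `x` on the hyperboloid and distinct primitive isotropic integral
vectors `e, e'` in the closure of the positive cone, `(e,e') ≤ 2(x,e)(x,e')`. -/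
theorem stmt1 (n : ℕ)
    (B : (Fin (n+1) → ℝ) → (Fin (n+1) → ℝ) → ℝ)
    (hsig : ∃ T : (Fin (n+1) → ℝ) ≃ₗ[ℝ] (Fin (n+1) → ℝ),
      ∀ v w, B v w = mink n (T v) (T w))
    (hInt : ∀ v w : Fin (n+1) → ℤ, ∃ m : ℤ, B (zc n v) (zc n w) = (m : ℝ))
    (C : Set (Fin (n+1) → ℝ))
    (hC : ∃ v₀, 0 < B v₀ v₀ ∧ C = connectedComponentIn {v | 0 < B v v} v₀)
    (x : Fin (n+1) → ℝ) (hx : x ∈ hyperboloid n B C)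
    (e e' : Fin (n+1) → ℤ) (hne : e ≠ e')
    (hprim : Primitive n e) (hprim' : Primitive n e')
    (hiso : B (zc n e) (zc n e) = 0) (hiso' : B (zc n e') (zc n e') = 0)
    (hcl : zc n e ∈ closure C) (hcl' : zc n e' ∈ closure C) :
    B (zc n e) (zc n e') ≤ 2 * (B x (zc n e)) * (B x (zc n e')) := by
  obtain ⟨T, hT⟩ := hsig
  obtain ⟨v₀, hv₀, hCeq⟩ := hC
  subst hCeq
  obtain ⟨hxC, hxx⟩ : x ∈ connectedComponentIn {v | 0 < B v v} v₀ ∧ B x x = 1 := hx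
  -- bilinearity helpers
  have hBcomm : ∀ v w, B v w = B w v := fun v w => by rw [hT, hT, mink_comm]
  have hBsubl : ∀ v w z, B (v - w) z = B v z - B w z := fun v w z => by
    rw [hT, hT, hT, map_sub, mink_sub_left]
  have hBaddl : ∀ v w z, B (v + w) z = B v z + B w z := fun v w z => by
    rw [hT, hT, hT, map_add, mink_add_left]
  have hBsmull : ∀ (c : ℝ) v z, B (c • v) z = c * B v z := fun c v z => by
    rw [hT, hT, _root_.map_smul, mink_smul_left]
  have hBsubr : ∀ z v w, B z (v - w) = B z v - B z w := fun z v w => by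
    rw [hBcomm z, hBsubl, hBcomm v z, hBcomm w z]
  have hBaddr : ∀ z v w, B z (v + w) = B z v + B z w := fun z v w => by
    rw [hBcomm z, hBaddl, hBcomm v z, hBcomm w z]
  have hBsmulr : ∀ (c : ℝ) z v, B z (c • v) = c * B z v := fun c z v => by
    rw [hBcomm z, hBsmull, hBcomm v z]
  -- sign lemma: the orthogonal complement of a positive vector is negative semidefinite
  have hsign : ∀ v w, 0 < B v v → B v w = 0 → B w w ≤ 0 := fun v w h1 h2 => by
    rw [hT] at h1 h2 ⊢
    exact mink_plane n _ _ h1 h2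
  have hx1 : 0 < B x x := by rw [hxx]; norm_num
  have hneg : ∀ w, B x w = 0 → B w w ≤ 0 := fun w hw => hsign x w hx1 hw
  -- continuity of v ↦ B x v
  have hTcont : Continuous fun v => T v :=
    LinearMap.continuous_of_finiteDimensional (T : (Fin (n+1) → ℝ) →ₗ[ℝ] (Fin (n+1) → ℝ))
  have hminkcont : Continuous fun w => mink n (T x) w := by
    unfold mink
    exact (continuous_const.mul (continuous_apply 0)).sub
      (continuous_finset_sum _ fun i _ => continuous_const.mul (continuous_apply _))
  have hcont : Continuous fun v => B x v := by
    have heq : (fun v => B x v) = (fun w => mink n (T x) w) ∘ fun v => T v :=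
      funext fun v => hT x v
    rw [heq]
    exact hminkcont.comp hTcont
  -- positivity of B x · on the cone and its closure
  have hCsub := connectedComponentIn_subset {v | 0 < B v v} v₀
  have hCconn : IsPreconnected (connectedComponentIn {v | 0 < B v v} v₀) :=
    (isConnected_connectedComponentIn_iff.mpr (show v₀ ∈ {v | 0 < B v v} from hv₀)).isPreconnected
  have hfC : ∀ v ∈ connectedComponentIn {v | 0 < B v v} v₀, 0 < B x v := by
    intro v hv
    rcases lt_trichotomy (B x v) 0 with h | h | h
    · exfalso
      have hsubset := hCconn.intermediate_value hv hxC hcont.continuousOn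
      have h0 : (0:ℝ) ∈ Set.Icc (B x v) (B x x) := ⟨h.le, by rw [hxx]; norm_num⟩
      obtain ⟨w, hwC, hw0⟩ := hsubset h0
      exact absurd (hCsub hwC) (not_lt.mpr (hneg w hw0))
    · exact absurd (hCsub hv) (not_lt.mpr (hneg v h))
    · exact h
  have hclpos : ∀ y ∈ closure (connectedComponentIn {v | 0 < B v v} v₀), 0 ≤ B x y :=
    fun y hy =>
      closure_minimal (fun v hv => (hfC v hv).le)
        (isClosed_le continuous_const hcont) hy
  -- decomposition
  set α := B x (zc n e) with hα
  set β := B x (zc n e') with hβ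
  have hα0 : 0 ≤ α := hclpos _ hcl
  have hβ0 : 0 ≤ β := hclpos _ hcl'
  set u := zc n e - α • x with hu
  set u' := zc n e' - β • x with hu'
  have hxu : B x u = 0 := by
    rw [hu, hBsubr, hBsmulr, hxx, ← hα]; ring
  have hxu' : B x u' = 0 := by
    rw [hu', hBsubr, hBsmulr, hxx, ← hβ]; ring
  have huu : B u u = -(α^2) := by
    simp only [hu, hBsubl, hBsubr, hBsmull, hBsmulr, hiso, hxx, hBcomm (zc n e) x, ← hα]
    ring
  have hu'u' : B u' u' = -(β^2) := by
    simp only [hu', hBsubl, hBsubr, hBsmull, hBsmulr, hiso', hxx, hBcomm (zc n e') x, ← hβ]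
    ring
  have he : zc n e = u + α • x := by rw [hu, sub_add_cancel]
  have he' : zc n e' = u' + β • x := by rw [hu', sub_add_cancel]
  have hcross : B (zc n e) (zc n e') = α * β + B u u' := by
    conv_lhs => rw [he, he']
    simp only [hBaddl, hBaddr, hBsmull, hBsmulr, hxx, hxu, hxu', hBcomm u x]
    ring
  have hquad : ∀ s t : ℝ, s^2 * (-(α^2)) + 2*s*t*(B u u') + t^2 * (-(β^2)) ≤ 0 := by
    intro s t
    have hw : B x (s • u + t • u') = 0 := by
      rw [hBaddr, hBsmulr, hBsmulr, hxu, hxu']; ring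
    have h := hneg _ hw
    simp only [hBaddl, hBaddr, hBsmull, hBsmulr, huu, hu'u', hBcomm u' u] at h
    nlinarith [h]
  have hmain : B u u' ≤ α * β := by
    rcases eq_or_lt_of_le hα0 with h0 | hαpos
    · have h1 := hquad (β^2+1) (B u u')
      rw [← h0] at h1 ⊢
      nlinarith [h1, sq_nonneg β, sq_nonneg (B u u')]
    · rcases eq_or_lt_of_le hβ0 with h0 | hβpos
      · have h1 := hquad (B u u') (α^2+1)
        rw [← h0] at h1 ⊢
        nlinarith [h1, sq_nonneg α, sq_nonneg (B u u')]
      · have h1 := hquad β α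
        nlinarith [h1, mul_pos hαpos hβpos]
  rw [hcross]
  linarith [hmain]
end
end

section
/- Let L be a lattice of signature (1,n) with positive cone C. For each primitive isotropic integral vector e in the closure of C, define the open horoball B_e = {x ∈ H^n : (x,e) < 1/2}. Then for distinct primitive isotropic integral vectors e and e', the horoballs B_e and B_{e'} are disjoint. -/
open Matrix Filter Topology
open scoped BigOperators

noncomputable section

/-!
For `x` on the hyperboloid and isotropic `e, e'` in the closure of the cone, `a = (x,e)` and
`b = (x,e')` are positive, and negativity of `x⊥` applied to `b e - a e'` and to
`b e + a e' - 2ab x` gives `0 ≤ (e,e') ≤ 2ab`. In both horoballs `2ab < 1/2`, so the integer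
`(e,e')` vanishes; then `b e - a e'` is isotropic in `x⊥`, hence zero, and two primitive integral
vectors on one ray coincide.
-/

open LinearMap (BilinForm)

namespace LinearMap.BilinForm

variable {V W : Type*} [AddCommGroup V] [Module ℝ V] [AddCommGroup W] [Module ℝ W]

/-- The orthogonal complement of every positive vector is negative definite: for a nondegenerate
form this means signature `(1, n)` (or no positive vectors at all). -/
structure IsLorentzian (Q : BilinForm ℝ V) : Prop where
  isSymm : Q.IsSymm
  neg_of_orthogonal : ∀ ⦃u v : V⦄, 0 < Q u u → Q u v = 0 → v ≠ 0 → Q v v < 0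

namespace IsLorentzian

variable {Q : BilinForm ℝ V} {u v x e e' : V}

lemma nonpos_of_orthogonal (hQ : Q.IsLorentzian) (hu : 0 < Q u u) (huv : Q u v = 0) :
    Q v v ≤ 0 := by
  rcases eq_or_ne v 0 with rfl | hv
  · simp
  · exact (hQ.neg_of_orthogonal hu huv hv).le

lemma eq_zero_of_orthogonal_of_isotropic (hQ : Q.IsLorentzian) (hu : 0 < Q u u)
    (huv : Q u v = 0) (hv : Q v v = 0) : v = 0 := by
  by_contra h
  exact (hQ.neg_of_orthogonal hu huv h).ne hv

lemma compl₁₂ (hQ : Q.IsLorentzian) {T : W →ₗ[ℝ] V} (hT : Function.Injective T) :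
    BilinForm.IsLorentzian (Q.compl₁₂ T T) where
  isSymm := ⟨fun _ _ => hQ.isSymm.eq _ _⟩
  neg_of_orthogonal _ _ hu huv hv :=
    hQ.neg_of_orthogonal hu huv ((map_ne_zero_iff T hT).mpr hv)

section Isotropic

variable (hQ : Q.IsLorentzian) (he : Q e e = 0) (he' : Q e' e' = 0)
include hQ he he'

lemma apply_smul_sub_smul_of_isotropic :
    Q x (Q x e' • e - Q x e • e') = 0 ∧
      Q (Q x e' • e - Q x e • e') (Q x e' • e - Q x e • e') =
        -(2 * Q x e * Q x e') * Q e e' := by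
  have hsymm := hQ.isSymm.eq e' e
  constructor
  · simp only [map_sub, map_smul, smul_eq_mul]
    ring
  · simp only [map_sub, map_smul, LinearMap.sub_apply, LinearMap.smul_apply, smul_eq_mul,
      he, he', hsymm]
    ring

lemma nonneg_of_isotropic (hx : 0 < Q x x) (hpos : 0 < Q x e * Q x e') : 0 ≤ Q e e' := by
  obtain ⟨horth, hsq⟩ := apply_smul_sub_smul_of_isotropic hQ he he' (x := x)
  have := hQ.nonpos_of_orthogonal hx horth
  nlinarith

lemma smul_eq_smul_of_isotropic (hx : 0 < Q x x) (hee' : Q e e' = 0) :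
    Q x e' • e = Q x e • e' := by
  obtain ⟨horth, hsq⟩ := apply_smul_sub_smul_of_isotropic hQ he he' (x := x)
  rw [hee', mul_zero] at hsq
  exact sub_eq_zero.mp (hQ.eq_zero_of_orthogonal_of_isotropic hx horth hsq)

lemma le_two_mul_of_isotropic (hx : Q x x = 1) (hpos : 0 < Q x e * Q x e') :
    Q e e' ≤ 2 * Q x e * Q x e' := by
  set w := Q x e' • e + Q x e • e' - (2 * Q x e * Q x e') • x
  have hsymm := hQ.isSymm.eq
  have horth : Q x w = 0 := by
    simp only [w, map_sub, map_add, map_smul, smul_eq_mul, hx]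
    ring
  have hsq : Q w w = 2 * Q x e * Q x e' * (Q e e' - 2 * Q x e * Q x e') := by
    simp only [w, map_sub, map_add, map_smul, LinearMap.sub_apply, LinearMap.add_apply,
      LinearMap.smul_apply, smul_eq_mul, he, he', hx, hsymm e' e, hsymm e x, hsymm e' x]
    ring
  have := hQ.nonpos_of_orthogonal (hx ▸ one_pos) horth
  nlinarith

end Isotropic

section Cone

variable [TopologicalSpace V] [IsTopologicalAddGroup V] [ContinuousSMul ℝ V] [T2Space V]
  [FiniteDimensional ℝ V] {v₀ : V}

/-- `Q x` cannot vanish on the positive cone, so it keeps the sign of `Q x x` there. -/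
lemma pos_of_mem_connectedComponentIn (hQ : Q.IsLorentzian) {y : V}
    (hx : x ∈ connectedComponentIn {v | 0 < Q v v} v₀)
    (hy : y ∈ connectedComponentIn {v | 0 < Q v v} v₀) : 0 < Q x y := by
  have hpos : ∀ z ∈ connectedComponentIn {v | 0 < Q v v} v₀, 0 < Q z z :=
    fun z hz => connectedComponentIn_subset {v : V | 0 < Q v v} v₀ hz
  have hne : ∀ z ∈ connectedComponentIn {v | 0 < Q v v} v₀, Q x z ≠ 0 :=
    fun z hz hxz => (hpos z hz).not_ge (hQ.nonpos_of_orthogonal (hpos x hx) hxz)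
  by_contra! hle
  obtain ⟨z, hz, hxz⟩ := isPreconnected_connectedComponentIn.intermediate_value hy hx
    (Q x).continuous_of_finiteDimensional.continuousOn ⟨hle, (hpos x hx).le⟩
  exact hne z hz hxz

lemma pos_of_mem_closure_connectedComponentIn (hQ : Q.IsLorentzian)
    (hx : x ∈ connectedComponentIn {v | 0 < Q v v} v₀)
    (he : e ∈ closure (connectedComponentIn {v | 0 < Q v v} v₀)) (he0 : e ≠ 0)
    (hee : Q e e = 0) : 0 < Q x e := by
  have hx' : 0 < Q x x := connectedComponentIn_subset {v : V | 0 < Q v v} v₀ hx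
  have hnonneg : 0 ≤ Q x e :=
    closure_minimal (fun y hy => (hQ.pos_of_mem_connectedComponentIn hx hy).le)
      (isClosed_Ici.preimage (Q x).continuous_of_finiteDimensional) he
  exact hnonneg.lt_of_ne fun h => he0 (hQ.eq_zero_of_orthogonal_of_isotropic hx' h.symm hee)

end Cone

end IsLorentzian

end LinearMap.BilinForm

def minkowskiForm (n : ℕ) : BilinForm ℝ (Fin (n+1) → ℝ) :=
  LinearMap.mk₂ ℝ (mink n)
    (fun u v w => by simp only [mink, Pi.add_apply, add_mul, Finset.sum_add_distrib]; ring)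
    (fun c u w => by
      simp only [mink, Pi.smul_apply, smul_eq_mul, mul_assoc, ← Finset.mul_sum]; ring)
    (fun u v w => by simp only [mink, Pi.add_apply, mul_add, Finset.sum_add_distrib]; ring)
    (fun c u w => by
      simp only [mink, Pi.smul_apply, smul_eq_mul, mul_left_comm _ c, ← Finset.mul_sum]; ring)

lemma minkowskiForm_apply (n : ℕ) (v w : Fin (n+1) → ℝ) : minkowskiForm n v w = mink n v w :=
  rfl

/-- Cauchy–Schwarz on the spatial coordinates: `(u₀v₀)² = ⟨u', v'⟩² ≤ |u'|²|v'|² < u₀²|v'|²`. -/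
lemma isLorentzian_minkowskiForm (n : ℕ) : (minkowskiForm n).IsLorentzian where
  isSymm := ⟨fun v w => by simp only [minkowskiForm_apply, mink, mul_comm]⟩
  neg_of_orthogonal u v hu huv hv := by
    simp only [minkowskiForm_apply, mink, ← sq] at hu huv ⊢
    have hcs := Finset.sum_mul_sq_le_sq_mul_sq Finset.univ (fun i : Fin n => u i.succ)
      (fun i => v i.succ)
    have hu0 : 0 < u 0 ^ 2 :=
      lt_of_le_of_lt (Finset.sum_nonneg fun i _ => sq_nonneg (u i.succ)) (sub_pos.mp hu)
    have hv' : 0 < ∑ i : Fin n, v i.succ ^ 2 := by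
      by_contra! hle
      have hspace : ∀ i : Fin n, v i.succ = 0 := fun i => pow_eq_zero_iff two_ne_zero |>.mp <|
        (Finset.sum_eq_zero_iff_of_nonneg fun i _ => sq_nonneg (v i.succ)).mp
          (hle.antisymm (Finset.sum_nonneg fun i _ => sq_nonneg _)) i (Finset.mem_univ i)
      have htime : v 0 = 0 := by
        simp only [hspace, mul_zero, Finset.sum_const_zero, sub_zero] at huv
        exact (mul_eq_zero.mp huv).resolve_left (pow_ne_zero_iff two_ne_zero |>.mp hu0.ne')
      exact hv (funext fun i => Fin.cases htime hspace i)
    have hcs' : u 0 ^ 2 * v 0 ^ 2 ≤ (∑ i : Fin n, u i.succ ^ 2) * ∑ i : Fin n, v i.succ ^ 2 := by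
      rwa [← mul_pow, sub_eq_zero.mp huv]
    have hlt : u 0 ^ 2 * v 0 ^ 2 < u 0 ^ 2 * ∑ i : Fin n, v i.succ ^ 2 :=
      hcs'.trans_lt (mul_lt_mul_of_pos_right (by linarith) hv')
    linarith [lt_of_mul_lt_mul_left hlt hu0.le]

namespace Primitive

variable {n : ℕ} {e e' : Fin (n+1) → ℤ}

lemma ne_zero (he : Primitive n e) : e ≠ 0 := by
  rintro rfl
  exact he ⟨0, 2, le_rfl, by simp⟩

lemma zc_ne_zero (he : Primitive n e) : zc n e ≠ 0 := fun h0 =>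
  he.ne_zero (funext fun j => by simpa [zc] using congrFun h0 j)

lemma isUnit_of_forall_dvd (he : Primitive n e) {t : ℤ} (ht : ∀ j, t ∣ e j) : IsUnit t := by
  rw [Int.isUnit_iff_abs_eq]
  have hdiv : e = |t| • fun j => e j / |t| :=
    funext fun j => (Int.mul_ediv_cancel' ((abs_dvd t _).mpr (ht j))).symm
  by_contra hne
  rcases (show |t| = 0 ∨ 2 ≤ |t| by have := abs_nonneg t; omega) with h0 | h2
  · exact he.ne_zero (by rw [hdiv, h0, zero_smul])
  · exact he ⟨_, _, h2, hdiv⟩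

lemma eq_of_smul_eq_smul (he : Primitive n e) (he' : Primitive n e') {p q : ℤ}
    (hpq : 0 < p * q) (h : q • e = p • e') : e = e' := by
  obtain ⟨g, p', q', hg, hgcd, rfl, rfl⟩ :=
    Int.exists_gcd_one' (Int.gcd_pos_of_ne_zero_left q (left_ne_zero_of_mul hpq.ne'))
  have hcop : IsCoprime p' q' := Int.isCoprime_iff_gcd_eq_one.mpr hgcd
  have h' : q' • e = p' • e' := smul_right_injective _ (Int.natCast_ne_zero.mpr hg.ne') <| by
    simpa only [mul_comm _ (g : ℤ), mul_smul] using h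
  have hq' : IsUnit q' := he'.isUnit_of_forall_dvd fun j =>
    hcop.symm.dvd_of_dvd_mul_left ⟨e j, by simpa using (congrFun h' j).symm⟩
  have hp' : IsUnit p' := he.isUnit_of_forall_dvd fun j =>
    hcop.dvd_of_dvd_mul_left ⟨e' j, by simpa using congrFun h' j⟩
  have hpq' : p' = q' := by
    rcases Int.isUnit_iff.mp hp' with rfl | rfl <;> rcases Int.isUnit_iff.mp hq' with rfl | rfl <;>
      first | rfl | nlinarith
  subst hpq'
  exact smul_right_injective _ hq'.ne_zero h'

lemma eq_of_sameRay (he : Primitive n e) (he' : Primitive n e')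
    (h : SameRay ℝ (zc n e) (zc n e')) : e = e' := by
  obtain ⟨r, s, hr, hs, hrs⟩ := h.exists_pos he.zc_ne_zero he'.zc_ne_zero
  have hcoord : ∀ j, r * e j = s * e' j := fun j => by simpa [zc] using congrFun hrs j
  obtain ⟨i, hi⟩ : ∃ i, e i ≠ 0 := Function.ne_iff.mp he.ne_zero
  refine he.eq_of_smul_eq_smul he' (p := e i) (q := e' i) ?_ (funext fun j => ?_)
  · have hi' : (e i : ℝ) ≠ 0 := by exact_mod_cast hi
    have hprod : s * (e i * e' i) = r * (e i : ℝ) ^ 2 := by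
      linear_combination (-(e i : ℝ)) * hcoord i
    have : (0 : ℝ) < e i * e' i := pos_of_mul_pos_right (hprod ▸ by positivity) hs.le
    exact_mod_cast this
  · have : (e' i : ℝ) * e j = e i * e' j :=
      mul_left_cancel₀ hr.ne' (by linear_combination (e' i : ℝ) * hcoord j - (e' j : ℝ) * hcoord i)
    simp only [Pi.smul_apply, smul_eq_mul]
    exact_mod_cast this

end Primitive

/-- the horoballs `B_e = {x ∈ Hⁿ : (x,e) < 1/2}` at distinct primitive
isotropic integral vectors in the closure of the positive cone are disjoint. -/
theorem stmt2 (n : ℕ)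
    (B : (Fin (n+1) → ℝ) → (Fin (n+1) → ℝ) → ℝ)
    (hsig : ∃ T : (Fin (n+1) → ℝ) ≃ₗ[ℝ] (Fin (n+1) → ℝ),
      ∀ v w, B v w = mink n (T v) (T w))
    (hInt : ∀ v w : Fin (n+1) → ℤ, ∃ m : ℤ, B (zc n v) (zc n w) = (m : ℝ))
    (C : Set (Fin (n+1) → ℝ))
    (hC : ∃ v₀, 0 < B v₀ v₀ ∧ C = connectedComponentIn {v | 0 < B v v} v₀)
    (e e' : Fin (n+1) → ℤ) (hne : e ≠ e')
    (hprim : Primitive n e) (hprim' : Primitive n e')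
    (hiso : B (zc n e) (zc n e) = 0) (hiso' : B (zc n e') (zc n e') = 0)
    (hcl : zc n e ∈ closure C) (hcl' : zc n e' ∈ closure C) :
    Disjoint {x | x ∈ hyperboloid n B C ∧ B x (zc n e) < 1/2}
             {x | x ∈ hyperboloid n B C ∧ B x (zc n e') < 1/2} := by
  obtain ⟨T, hT⟩ := hsig
  obtain ⟨v₀, -, rfl⟩ := hC
  set Q : BilinForm ℝ (Fin (n+1) → ℝ) := (minkowskiForm n).compl₁₂ T.toLinearMap T.toLinearMap
  have hQ : Q.IsLorentzian := (isLorentzian_minkowskiForm n).compl₁₂ T.injective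
  obtain rfl : B = fun v w => Q v w := funext₂ hT
  rw [Set.disjoint_left]
  rintro x ⟨⟨hxC, hxx⟩, hxe⟩ ⟨-, hxe'⟩
  simp only at hxx hxe hxe'
  have ha := hQ.pos_of_mem_closure_connectedComponentIn hxC hcl hprim.zc_ne_zero hiso
  have hb := hQ.pos_of_mem_closure_connectedComponentIn hxC hcl' hprim'.zc_ne_zero hiso'
  have hab := mul_pos ha hb
  have hx : 0 < Q x x := hxx ▸ one_pos
  obtain ⟨m, hm⟩ := hInt e e'
  simp only at hm
  have hm_nonneg : (0 : ℝ) ≤ m := hm ▸ hQ.nonneg_of_isotropic hiso hiso' hx hab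
  have hm_lt_one : (m : ℝ) < 1 := by
    nlinarith [hm ▸ hQ.le_two_mul_of_isotropic hiso hiso' hxx hab]
  have hm0 : m = 0 := by
    have : 0 ≤ m ∧ m < 1 := ⟨by exact_mod_cast hm_nonneg, by exact_mod_cast hm_lt_one⟩
    omega
  have hprop := hQ.smul_eq_smul_of_isotropic hiso hiso' hx (by rw [hm, hm0, Int.cast_zero])
  exact hne (hprim.eq_of_sameRay hprim' (Or.inr (Or.inr ⟨_, _, hb, ha, hprop⟩)))
end
end

section
/- The even hyperbolic lattice ⟨4⟩ ⊕ ⟨−8⟩ ⊕ ⟨−12k⟩, for k a positive integer with k ≡ 1 (mod 3), contains no vectors v with (v,v) = −2 and no nonzero isotropic vectors. -/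
lemma zmod3_aux : ∀ a b : ZMod 3, a ^ 2 - 2 * b ^ 2 = 0 → a = 0 ∧ b = 0 := by decide

lemma descent_key (k : ℤ) (hk3 : k % 3 = 1) :
    ∀ n : ℕ, ∀ x y z : ℤ, x.natAbs + y.natAbs + z.natAbs ≤ n →
      x ^ 2 - 2 * y ^ 2 - 3 * k * z ^ 2 = 0 → x = 0 ∧ y = 0 ∧ z = 0 := by
  have hkz : (k : ZMod 3) = 1 := by
    have : k = 3 * (k / 3) + 1 := by omega
    rw [this]; push_cast
    rw [show (3 : ZMod 3) = 0 by decide]; ring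
  intro n
  induction n using Nat.strong_induction_on with
  | _ n ih =>
    intro x y z hle heq
    -- mod 3: x ≡ y ≡ 0
    have e3 : (x : ZMod 3) ^ 2 - 2 * (y : ZMod 3) ^ 2 = 0 := by
      have : ((x ^ 2 - 2 * y ^ 2 - 3 * k * z ^ 2 : ℤ) : ZMod 3) = 0 := by
        rw [heq]; simp
      push_cast at this
      rw [show (3 : ZMod 3) = 0 by decide] at this
      linear_combination this
    obtain ⟨hx0, hy0⟩ := zmod3_aux _ _ e3
    have hx3 : (3:ℤ) ∣ x := by
      rwa [ZMod.intCast_zmod_eq_zero_iff_dvd] at hx0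
    have hy3 : (3:ℤ) ∣ y := by
      rwa [ZMod.intCast_zmod_eq_zero_iff_dvd] at hy0
    obtain ⟨a, rfl⟩ := hx3
    obtain ⟨b, rfl⟩ := hy3
    -- get 3 ∣ z
    have hz3 : (3:ℤ) ∣ z := by
      have e3z : (k : ZMod 3) * (z : ZMod 3) ^ 2 = 0 := by
        have h9 : 9 * a ^ 2 - 18 * b ^ 2 - 3 * k * z ^ 2 = 0 := by linarith
        have h3 : 3 * a ^ 2 - 6 * b ^ 2 - k * z ^ 2 = 0 := by linarith
        have : ((3 * a ^ 2 - 6 * b ^ 2 - k * z ^ 2 : ℤ) : ZMod 3) = 0 := by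
          rw [h3]; simp
        push_cast at this
        rw [show (3 : ZMod 3) = 0 by decide,
            show (6 : ZMod 3) = 0 by decide] at this
        linear_combination -this
      rw [hkz, one_mul] at e3z
      have haux : ∀ w : ZMod 3, w ^ 2 = 0 → w = 0 := by decide
      have : (z : ZMod 3) = 0 := haux _ e3z
      rwa [ZMod.intCast_zmod_eq_zero_iff_dvd] at this
    obtain ⟨c, rfl⟩ := hz3
    have heq' : a ^ 2 - 2 * b ^ 2 - 3 * k * c ^ 2 = 0 := by nlinarith [heq]
    by_cases hzero : a = 0 ∧ b = 0 ∧ c = 0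
    · obtain ⟨rfl, rfl, rfl⟩ := hzero
      exact ⟨by ring, by ring, by ring⟩
    · have hn : (3 * a).natAbs = 3 * a.natAbs := by
        rw [Int.natAbs_mul]; rfl
      have hnb : (3 * b).natAbs = 3 * b.natAbs := by
        rw [Int.natAbs_mul]; rfl
      have hnc : (3 * c).natAbs = 3 * c.natAbs := by
        rw [Int.natAbs_mul]; rfl
      have hpos : 1 ≤ a.natAbs + b.natAbs + c.natAbs := by
        rcases Nat.eq_zero_or_pos (a.natAbs + b.natAbs + c.natAbs) with h | h
        · exfalso; apply hzero
          refine ⟨?_, ?_, ?_⟩ <;> [skip; skip; skip] <;>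
            · rw [← Int.natAbs_eq_zero]; omega
        · exact h
      have hm : a.natAbs + b.natAbs + c.natAbs < n := by
        rw [hn, hnb, hnc] at hle; omega
      obtain ⟨ha, hb, hc⟩ := ih _ hm a b c (le_refl _) heq'
      exact ⟨by rw [ha]; ring, by rw [hb]; ring, by rw [hc]; ring⟩

/-- the lattice `⟨4⟩ ⊕ ⟨−8⟩ ⊕ ⟨−12k⟩`, for `k ≡ 1 (mod 3)` positive,
has no roots (vectors of square `−2`) and no nonzero isotropic vectors. -/
theorem stmt12 (k : ℤ) (hk : 0 < k) (hk3 : k % 3 = 1) :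
    (∀ x y z : ℤ, 4 * x ^ 2 - 8 * y ^ 2 - 12 * k * z ^ 2 ≠ -2) ∧
    (∀ x y z : ℤ, 4 * x ^ 2 - 8 * y ^ 2 - 12 * k * z ^ 2 = 0 →
      x = 0 ∧ y = 0 ∧ z = 0) := by
  constructor
  · intro x y z h
    have : (4:ℤ) ∣ -2 := ⟨x ^ 2 - 2 * y ^ 2 - 3 * k * z ^ 2, by linarith⟩
    norm_num at this
  · intro x y z h
    have heq : x ^ 2 - 2 * y ^ 2 - 3 * k * z ^ 2 = 0 := by linarith
    exact descent_key k hk3 (x.natAbs + y.natAbs + z.natAbs) x y z (le_refl _) heq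
end

section
/- The even hyperbolic lattice ⟨4⟩ ⊕ ⟨−8⟩ ⊕ ⟨−12⟩ ⊕ ⟨−12k⟩, for k a positive integer with k ≡ 1 (mod 3), contains no vectors of square −2 and no nonzero isotropic vectors. -/
lemma aux13_l1 (a b : ℤ) (h : (3:ℤ) ∣ a ^ 2 - 2 * b ^ 2) : (3:ℤ) ∣ a ∧ (3:ℤ) ∣ b := by
  have h' : ((a ^ 2 - 2 * b ^ 2 : ℤ) : ZMod 3) = 0 :=
    (ZMod.intCast_zmod_eq_zero_iff_dvd _ 3).mpr h
  push_cast at h'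
  have key : ∀ A B : ZMod 3, A ^ 2 - 2 * B ^ 2 = 0 → A = 0 ∧ B = 0 := by decide
  obtain ⟨hA, hB⟩ := key _ _ h'
  exact ⟨(ZMod.intCast_zmod_eq_zero_iff_dvd a 3).mp hA,
         (ZMod.intCast_zmod_eq_zero_iff_dvd b 3).mp hB⟩

lemma aux13_l2 (a b : ℤ) (h : (3:ℤ) ∣ a ^ 2 + b ^ 2) : (3:ℤ) ∣ a ∧ (3:ℤ) ∣ b := by
  have h' : ((a ^ 2 + b ^ 2 : ℤ) : ZMod 3) = 0 :=
    (ZMod.intCast_zmod_eq_zero_iff_dvd _ 3).mpr h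
  push_cast at h'
  have key : ∀ A B : ZMod 3, A ^ 2 + B ^ 2 = 0 → A = 0 ∧ B = 0 := by decide
  obtain ⟨hA, hB⟩ := key _ _ h'
  exact ⟨(ZMod.intCast_zmod_eq_zero_iff_dvd a 3).mp hA,
         (ZMod.intCast_zmod_eq_zero_iff_dvd b 3).mp hB⟩

lemma aux13_descent (k : ℤ) (hk : 0 < k) (hk3 : k % 3 = 1) :
    ∀ n : ℕ, ∀ x y z w : ℤ, x.natAbs ≤ n →
      x ^ 2 = 2 * y ^ 2 + 3 * z ^ 2 + 3 * k * w ^ 2 →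
      x = 0 ∧ y = 0 ∧ z = 0 ∧ w = 0 := by
  intro n
  induction n with
  | zero =>
    intro x y z w hx h
    have hx0 : x = 0 := by omega
    subst hx0
    have hkw : 0 ≤ k * w ^ 2 := mul_nonneg hk.le (sq_nonneg w)
    have hy : y ^ 2 = 0 := by nlinarith [sq_nonneg z]
    have hz : z ^ 2 = 0 := by nlinarith [sq_nonneg y]
    have hw : w ^ 2 = 0 := by nlinarith [sq_nonneg y, sq_nonneg z, sq_nonneg w]
    refine ⟨rfl, by nlinarith, by nlinarith, by nlinarith⟩
  | succ n ih =>
    intro x y z w hx h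
    have d1 : (3:ℤ) ∣ x ^ 2 - 2 * y ^ 2 := ⟨z ^ 2 + k * w ^ 2, by ring_nf; linarith⟩
    obtain ⟨hdx, hdy⟩ := aux13_l1 x y d1
    obtain ⟨a, rfl⟩ := hdx
    obtain ⟨b, rfl⟩ := hdy
    have h2 : 3 * a ^ 2 = 6 * b ^ 2 + z ^ 2 + k * w ^ 2 := by nlinarith [h]
    have d2 : (3:ℤ) ∣ z ^ 2 + w ^ 2 := by
      have dk : (3:ℤ) ∣ (k - 1) := by omega
      obtain ⟨m, hm⟩ := dk
      exact ⟨a ^ 2 - 2 * b ^ 2 - m * w ^ 2, by nlinarith [h2]⟩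
    obtain ⟨hdz, hdw⟩ := aux13_l2 z w d2
    obtain ⟨c, rfl⟩ := hdz
    obtain ⟨d, rfl⟩ := hdw
    have h3 : a ^ 2 = 2 * b ^ 2 + 3 * c ^ 2 + 3 * k * d ^ 2 := by nlinarith [h2]
    have hle : a.natAbs ≤ n := by
      have : (3 * a).natAbs = 3 * a.natAbs := by
        simp [Int.natAbs_mul]
      omega
    obtain ⟨ha, hb, hc, hd⟩ := ih a b c d hle h3
    exact ⟨by omega, by omega, by omega, by omega⟩

/-- the lattice `⟨4⟩ ⊕ ⟨−8⟩ ⊕ ⟨−12⟩ ⊕ ⟨−12k⟩`, for `k ≡ 1 (mod 3)`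
positive, has no roots (square `−2`) and no nonzero isotropic vectors. -/
theorem stmt13 (k : ℤ) (hk : 0 < k) (hk3 : k % 3 = 1) :
    (∀ x y z w : ℤ, 4 * x ^ 2 - 8 * y ^ 2 - 12 * z ^ 2 - 12 * k * w ^ 2 ≠ -2) ∧
    (∀ x y z w : ℤ, 4 * x ^ 2 - 8 * y ^ 2 - 12 * z ^ 2 - 12 * k * w ^ 2 = 0 →
      x = 0 ∧ y = 0 ∧ z = 0 ∧ w = 0) := by
  constructor
  · intro x y z w h
    have : (4:ℤ) ∣ -2 := ⟨x ^ 2 - 2 * y ^ 2 - 3 * z ^ 2 - 3 * k * w ^ 2, by linarith⟩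
    norm_num at this
  · intro x y z w h
    have h' : x ^ 2 = 2 * y ^ 2 + 3 * z ^ 2 + 3 * k * w ^ 2 := by linarith
    exact aux13_descent k hk hk3 x.natAbs x y z w le_rfl h'
end

section
/- Let V be a real quadratic space of signature (1,n), C a positive cone, H^n the hyperboloid model, and P ⊂ V a closed convex cone generated by finitely many vectors in the closure of C. Then P ∩ H^n is the convex hull in the closed hyperbolic space of the finitely many points or boundary points determined by the generators; in particular P ∩ H^n is a generalized polytope (convex hull of finitely many points of the compactified hyperbolic space). -/
open Matrix Filter Topology
open scoped BigOperators

noncomputable section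

/-- for a closed convex cone `P` generated by finitely many vectors in the
closure of the positive cone, `P ∩ Hⁿ` is the set of hyperboloid points on rays through
the convex hull of the generators — i.e. the generalized polytope (convex hull in the
compactified hyperbolic space) determined by the points/boundary points the generators
define. -/
theorem stmt19 (n m : ℕ)
    (B : (Fin (n+1) → ℝ) → (Fin (n+1) → ℝ) → ℝ)
    (hsig : ∃ T : (Fin (n+1) → ℝ) ≃ₗ[ℝ] (Fin (n+1) → ℝ),
      ∀ v w, B v w = mink n (T v) (T w))
    (C : Set (Fin (n+1) → ℝ))
    (hC : ∃ v₀, 0 < B v₀ v₀ ∧ C = connectedComponentIn {v | 0 < B v v} v₀)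
    (v : Fin m → (Fin (n+1) → ℝ)) (hv : ∀ i, v i ∈ closure C) :
    {x | ∃ c : Fin m → ℝ, (∀ i, 0 ≤ c i) ∧ x = ∑ i, c i • v i} ∩ hyperboloid n B C
      = {x | x ∈ hyperboloid n B C ∧
          ∃ w ∈ convexHull ℝ (Set.range v), ∃ t : ℝ, 0 < t ∧ x = t • w} := by

  obtain ⟨T, hT⟩ := hsig
  have hB0 : B 0 0 = 0 := by
    rw [hT]; simp [mink]
  have hS : ∀ w ∈ convexHull ℝ (Set.range v),
      ∃ c : Fin m → ℝ, (∀ i, 0 ≤ c i) ∧ w = ∑ i, c i • v i := by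
    have hconv : Convex ℝ {x | ∃ c : Fin m → ℝ, (∀ i, 0 ≤ c i) ∧ x = ∑ i, c i • v i} := by
      rintro x ⟨c, hc, rfl⟩ y ⟨d, hd, rfl⟩ a b ha hb hab
      refine ⟨fun i => a * c i + b * d i, fun i =>
        add_nonneg (mul_nonneg ha (hc i)) (mul_nonneg hb (hd i)), ?_⟩
      simp [Finset.smul_sum, add_smul, smul_smul, Finset.sum_add_distrib]
    have hsub : Set.range v ⊆ {x | ∃ c : Fin m → ℝ, (∀ i, 0 ≤ c i) ∧ x = ∑ i, c i • v i} := by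
      rintro _ ⟨j, rfl⟩
      exact ⟨fun i => if i = j then 1 else 0, fun i => by positivity, by simp [ite_smul]⟩
    exact fun w hw => convexHull_min hsub hconv hw
  ext x
  simp only [Set.mem_inter_iff, Set.mem_setOf_eq]
  constructor
  · rintro ⟨⟨c, hc, rfl⟩, hx⟩
    refine ⟨hx, ?_⟩
    have hs : 0 < ∑ i, c i := by
      rcases (Finset.sum_nonneg fun i _ => hc i).lt_or_eq with h | h
      · exact h
      · exfalso
        have hall : ∀ i ∈ (Finset.univ : Finset (Fin m)), c i = 0 :=
          (Finset.sum_eq_zero_iff_of_nonneg fun i _ => hc i).mp h.symm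
        have hz : (∑ i, c i • v i) = 0 :=
          Finset.sum_eq_zero fun i hi => by rw [hall i hi, zero_smul]
        rw [hz] at hx
        rw [hx.2] at hB0
        norm_num at hB0
    refine ⟨Finset.univ.centerMass c v, ?_, ∑ i, c i, hs, ?_⟩
    · exact Finset.centerMass_mem_convexHull _ (fun i _ => hc i) hs
        (fun i _ => Set.mem_range_self i)
    · rw [Finset.centerMass, smul_smul, mul_inv_cancel₀ hs.ne', one_smul]
  · rintro ⟨hx, w, hw, t, ht, rfl⟩
    refine ⟨?_, hx⟩
    obtain ⟨c, hc, rfl⟩ := hS w hw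
    exact ⟨fun i => t * c i, fun i => mul_nonneg ht.le (hc i),
      by simp [Finset.smul_sum, smul_smul]⟩
end
end
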